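/- Computing the number of maximal flat intervals of w = u − v and returning |F_w| − 2 gives a factor-2 approximation for dist_any(u,v) when u and v are distinct CNPs with no null positions: (|F_w| − 1)/2 ≤ dist_any(u,v) ≤ |F_w| − 2, hence |F_w| − 2 ≤ 2·dist_any(u,v). -/

import Mathlib

open scoped ENat

/-- A copy-number profile of dimension `n`: positions are `Fin n` (position `i+1` in 1-based terms),
values are non-negative integers. -/
abbrev CNP (n : ℕ) := Fin n → ℕ

/-- An event `(s, t, δ)`: affects 1-based positions in `[s, t]`, changing copy numbers by `δ`. -/
abbrev Event := ℕ × ℕ × ℤ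

/-- A valid event has `1 ≤ s ≤ t ≤ n` and `δ ≠ 0`. -/
def ValidEvent (n : ℕ) (e : Event) : Prop :=
  1 ≤ e.1 ∧ e.1 ≤ e.2.1 ∧ e.2.1 ≤ n ∧ e.2.2 ≠ 0

/-- Applying event `e = (s,t,δ)` to `u` : each 1-based position `i ∈ [s,t]` with `u_i > 0`
becomes `max(u_i + δ, 0)`; other positions are unchanged. -/
def applyEvent {n : ℕ} (u : CNP n) (e : Event) : CNP n :=
  fun i => if e.1 ≤ (i : ℕ) + 1 ∧ (i : ℕ) + 1 ≤ e.2.1 ∧ 0 < u i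
    then ((u i : ℤ) + e.2.2).toNat else u i

/-- Applying a sequence of events in order. -/
def applySeq {n : ℕ} (u : CNP n) (E : List Event) : CNP n :=
  E.foldl applyEvent u

/-- Cost of applying event `e` on `u` w.r.t. cost function `f`:
the maximum of `f (u_i) δ` over affected positions `i ∈ [s,t]`. -/
noncomputable def eventCost {n : ℕ} (f : ℕ → ℤ → ℕ∞) (u : CNP n) (e : Event) : ℕ∞ :=
  (Finset.univ.filter (fun i : Fin n => e.1 ≤ (i : ℕ) + 1 ∧ (i : ℕ) + 1 ≤ e.2.1)).sup
    (fun i => f (u i) e.2.2)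

/-- Total cost of applying a sequence of events, costs evaluated on successive profiles. -/
noncomputable def seqCost {n : ℕ} (f : ℕ → ℤ → ℕ∞) : CNP n → List Event → ℕ∞
  | _, [] => 0
  | u, e :: E => eventCost f u e + seqCost f (applyEvent u e) E

/-- `dist_f(u,v)`: minimum total cost of a sequence of valid events transforming `u` into `v`
(`⊤` if no such sequence exists). -/
noncomputable def distf {n : ℕ} (f : ℕ → ℤ → ℕ∞) (u v : CNP n) : ℕ∞ :=
  sInf { c | ∃ E : List Event, (∀ e ∈ E, ValidEvent n e) ∧ applySeq u E = v ∧ seqCost f u E = c }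

/-- A unit-cost function takes only values `1` and `∞`. -/
def UnitCost (f : ℕ → ℤ → ℕ∞) : Prop := ∀ c δ, f c δ = 1 ∨ f c δ = ⊤

/-- The most permissive cost function: every event costs `1`. -/
def anyCost : ℕ → ℤ → ℕ∞ := fun _ _ => 1

/-- `dist_any(u,v)`: minimum number of events transforming `u` into `v`. -/
noncomputable def distAny {n : ℕ} (u v : CNP n) : ℕ∞ := distf anyCost u v

/-- The difference vector `w = u - v` in 1-based indexing, extended by `w_0 = w_{n+1} = 0`. -/
def diffExt {n : ℕ} (u v : CNP n) (i : ℕ) : ℤ :=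
  if h : 1 ≤ i ∧ i ≤ n then (u ⟨i - 1, by omega⟩ : ℤ) - (v ⟨i - 1, by omega⟩ : ℤ) else 0

/-- `[a,b] ⊆ [0, n+1]` is a flat interval of `w` if `w` is constant on it. -/
def IsFlat (n : ℕ) (w : ℕ → ℤ) (a b : ℕ) : Prop :=
  a ≤ b ∧ b ≤ n + 1 ∧ ∀ i j, a ≤ i → i ≤ b → a ≤ j → j ≤ b → w i = w j

/-- A maximal flat interval: flat, and not properly contained in a flat interval. -/
def IsMaxFlat (n : ℕ) (w : ℕ → ℤ) (a b : ℕ) : Prop :=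
  IsFlat n w a b ∧ ∀ a' b', a' ≤ a → b ≤ b' → IsFlat n w a' b' → a' = a ∧ b' = b

/-- `|F_w|`: the number of maximal flat intervals of `w` over `[0, n+1]`. -/
noncomputable def numFlat (n : ℕ) (w : ℕ → ℤ) : ℕ :=
  Nat.card {p : ℕ × ℕ // IsMaxFlat n w p.1 p.2}

/-! Write `w = u - v`, extended by zeros, and `d = dist_any(u, v)`. A maximal flat interval of `w`
is determined by its left end, which is `0` or a position `p` with `w p ≠ w (p - 1)`. Since `v` has
no zeros and a zero entry is never changed again, no profile along a transformation of `u` into `v`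
has zeros; an event on `[s, t]` then adds a constant to `w` on `[s, t]`, so it changes the set of
left ends only at `s` and `t + 1`. Hence `|F_w| ≤ 2 d + 1`. Conversely, one event per maximal flat
interval with nonzero value, subtracting that value, transforms `u` into `v`; the intervals
containing `0` and `n + 1` have value `0` and are distinct since `u ≠ v`, so `d ≤ |F_w| - 2`. -/

open Finset

section FlatIntervals

variable {n : ℕ} {w : ℕ → ℤ} {a b : ℕ}

def flatStarts (n : ℕ) (w : ℕ → ℤ) : Finset ℕ :=
  {a ∈ range (n + 2) | a = 0 ∨ w a ≠ w (a - 1)}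

open Classical in
noncomputable def flatEnd (n : ℕ) (w : ℕ → ℤ) (a : ℕ) : ℕ :=
  Nat.findGreatest (IsFlat n w a) (n + 1)

lemma zero_mem_flatStarts : 0 ∈ flatStarts n w := by
  simp [flatStarts]

lemma le_of_mem_flatStarts (ha : a ∈ flatStarts n w) : a ≤ n + 1 := by
  have := (mem_filter.1 ha).1
  rw [mem_range] at this
  omega

lemma flatStarts_zero : flatStarts n (0 : ℕ → ℤ) = {0} := by
  ext a
  simp only [flatStarts, mem_filter, mem_range, Pi.zero_apply, ne_eq, not_true_eq_false,
    or_false, mem_singleton]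
  omega

lemma isFlat_refl (ha : a ≤ n + 1) : IsFlat n w a a :=
  ⟨le_rfl, ha, fun i j hi hi' hj hj' => by rw [le_antisymm hi' hi, le_antisymm hj' hj]⟩

lemma IsFlat.eq_left (h : IsFlat n w a b) {i : ℕ} (hi : a ≤ i) (hib : i ≤ b) : w i = w a :=
  h.2.2 i a hi hib le_rfl h.1

lemma isFlat_of_eq_left (hab : a ≤ b) (hb : b ≤ n + 1)
    (h : ∀ i, a ≤ i → i ≤ b → w i = w a) : IsFlat n w a b :=
  ⟨hab, hb, fun i j hi hib hj hjb => by rw [h i hi hib, h j hj hjb]⟩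

open Classical in
lemma isFlat_flatEnd (ha : a ≤ n + 1) : IsFlat n w a (flatEnd n w a) :=
  Nat.findGreatest_spec ha (isFlat_refl ha)

open Classical in
lemma IsFlat.le_flatEnd (h : IsFlat n w a b) : b ≤ flatEnd n w a :=
  Nat.le_findGreatest h.2.1 h

lemma isMaxFlat_iff : IsMaxFlat n w a b ↔ a ∈ flatStarts n w ∧ b = flatEnd n w a := by
  constructor
  · rintro ⟨hflat, hmax⟩
    have ha : a ≤ n + 1 := hflat.1.trans hflat.2.1
    have hab := hflat.1
    have hstart : a ∈ flatStarts n w := by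
      refine mem_filter.2 ⟨mem_range.2 (by omega), ?_⟩
      by_contra! h
      have hext : IsFlat n w (a - 1) b := isFlat_of_eq_left (by omega) hflat.2.1 fun i hi hib => by
        rcases lt_or_ge i a with hia | hia
        · rw [show i = a - 1 by omega]
        · rw [hflat.eq_left hia hib, h.2]
      have := (hmax _ _ (Nat.sub_le a 1) le_rfl hext).1
      omega
    exact ⟨hstart, (hmax a _ le_rfl hflat.le_flatEnd (isFlat_flatEnd ha)).2.symm⟩
  · rintro ⟨hstart, rfl⟩
    obtain ⟨ha, hleft⟩ := mem_filter.1 hstart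
    have hflat := isFlat_flatEnd (w := w) (by rw [mem_range] at ha; omega : a ≤ n + 1)
    refine ⟨hflat, fun a' b' ha' hb' h' => ?_⟩
    have hab' : a ≤ b' := hflat.1.trans hb'
    obtain rfl : a' = a := by
      by_contra hne
      rcases hleft with rfl | hleft
      · omega
      · exact hleft (h'.2.2 a (a - 1) ha' hab' (by omega) (by omega))
    exact ⟨rfl, le_antisymm h'.le_flatEnd hb'⟩

lemma numFlat_eq_card_flatStarts : numFlat n w = #(flatStarts n w) := by
  let S := (flatStarts n w).image fun a => (a, flatEnd n w a)
  have hS : ∀ p : ℕ × ℕ, IsMaxFlat n w p.1 p.2 ↔ p ∈ S := by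
    rintro ⟨a, b⟩
    simp [S, isMaxFlat_iff, eq_comm]
  rw [numFlat, Nat.card_congr (Equiv.subtypeEquivRight hS), Nat.card_eq_finsetCard,
    card_image_of_injective _ fun a b h => congrArg Prod.fst h]

lemma flatEnd_lt_of_lt (hab : a < b) (hb : b ∈ flatStarts n w) : flatEnd n w a < b := by
  by_contra! h
  have hflat := isFlat_flatEnd (w := w) (by have := le_of_mem_flatStarts hb; omega : a ≤ n + 1)
  rcases (mem_filter.1 hb).2 with rfl | hleft
  · omega
  · exact hleft ((hflat.eq_left hab.le h).trans (hflat.eq_left (by omega) (by omega)).symm)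

lemma exists_mem_flatStarts_le_le_flatEnd {q : ℕ} (hq : q ≤ n + 1) :
    ∃ a ∈ flatStarts n w, a ≤ q ∧ q ≤ flatEnd n w a := by
  induction q with
  | zero => exact ⟨0, zero_mem_flatStarts, le_rfl, Nat.zero_le _⟩
  | succ q ih =>
    by_cases hs : q + 1 ∈ flatStarts n w
    · exact ⟨q + 1, hs, le_rfl, (isFlat_flatEnd hq).1⟩
    have hstep : w (q + 1) = w q := by
      simpa [flatStarts, show q + 1 < n + 2 by omega] using hs
    obtain ⟨a, ha, haq, hqe⟩ := ih (by omega)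
    have hflat := isFlat_flatEnd (w := w) (by omega : a ≤ n + 1)
    refine ⟨a, ha, by omega, IsFlat.le_flatEnd (isFlat_of_eq_left (by omega) hq fun i hi hiq => ?_)⟩
    rcases hiq.lt_or_eq with hiq | rfl
    · exact hflat.eq_left hi (by omega)
    · rw [hstep]
      exact hflat.eq_left haq hqe

lemma card_filter_ne_zero_add_two_le (h0 : w 0 = 0) (hn : w (n + 1) = 0)
    (hw : ∃ q ≤ n + 1, w q ≠ 0) : #{a ∈ flatStarts n w | w a ≠ 0} + 2 ≤ #(flatStarts n w) := by
  obtain ⟨a, ha, -, hae⟩ := exists_mem_flatStarts_le_le_flatEnd (w := w) (le_refl (n + 1))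
  have hflat := isFlat_flatEnd (w := w) (le_of_mem_flatStarts ha)
  have hwa : w a = 0 := (hflat.eq_left (le_of_mem_flatStarts ha) hae).symm.trans hn
  have ha0 : a ≠ 0 := by
    rintro rfl
    obtain ⟨q, hq, hwq⟩ := hw
    exact hwq ((hflat.eq_left (Nat.zero_le q) (hq.trans hae)).trans h0)
  have hzeros : 1 < #{a ∈ flatStarts n w | ¬w a ≠ 0} :=
    one_lt_card.2 ⟨0, by simp [zero_mem_flatStarts, h0], a, by simp [ha, hwa], ha0.symm⟩
  have := card_filter_add_card_filter_not (s := flatStarts n w) (fun a => w a ≠ 0)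
  omega

lemma flatEnd_le_of_ne_zero (hn : w (n + 1) = 0) (ha : a ≤ n + 1) (hwa : w a ≠ 0) :
    flatEnd n w a ≤ n := by
  by_contra! h
  have hflat := isFlat_flatEnd (w := w) ha
  exact hwa (hn ▸ (hflat.eq_left (by omega) (by omega : n + 1 ≤ flatEnd n w a)).symm)

lemma flatStarts_subset_of_eq_add_ite {w' : ℕ → ℤ} {s t : ℕ} {δ : ℤ}
    (h : ∀ q, w' q = w q + if s ≤ q ∧ q ≤ t then δ else 0) :
    flatStarts n w ⊆ insert s (insert (t + 1) (flatStarts n w')) := by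
  intro p hp
  simp only [flatStarts, mem_insert, mem_filter] at hp ⊢
  by_cases hps : p = s
  · exact Or.inl hps
  by_cases hpt : p = t + 1
  · exact Or.inr (Or.inl hpt)
  refine Or.inr (Or.inr ⟨hp.1, ?_⟩)
  rcases hp.2 with hp0 | hne
  · exact Or.inl hp0
  have hp0 : p ≠ 0 := by rintro rfl; exact hne rfl
  have hshift : (if s ≤ p ∧ p ≤ t then δ else 0) = if s ≤ p - 1 ∧ p - 1 ≤ t then δ else 0 := by
    split_ifs <;> first | rfl | omega
  right
  rw [h, h, hshift]
  exact fun heq => hne (add_right_cancel heq)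

end FlatIntervals

section Profiles

variable {n : ℕ} {x u v : CNP n} {e : Event} {i : Fin n}

lemma applyEvent_apply_of_mem (hi : e.1 ≤ (i : ℕ) + 1 ∧ (i : ℕ) + 1 ≤ e.2.1) (hx : 0 < x i) :
    applyEvent x e i = ((x i : ℤ) + e.2.2).toNat :=
  if_pos ⟨hi.1, hi.2, hx⟩

lemma applyEvent_apply_of_not_mem (hi : ¬(e.1 ≤ (i : ℕ) + 1 ∧ (i : ℕ) + 1 ≤ e.2.1)) :
    applyEvent x e i = x i :=
  if_neg fun h => hi ⟨h.1, h.2.1⟩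

lemma applyEvent_apply_of_eq_zero (hx : x i = 0) : applyEvent x e i = 0 := by
  simp [applyEvent, hx]

lemma applySeq_apply_of_eq_zero (E : List Event) (hx : x i = 0) : applySeq x E i = 0 := by
  induction E generalizing x with
  | nil => exact hx
  | cons e E ih => exact ih (applyEvent_apply_of_eq_zero hx)

lemma pos_of_applySeq_eq {E : List Event} (hxv : applySeq x E = v) (hv : ∀ i, 0 < v i)
    (i : Fin n) : 0 < x i := by
  by_contra! hx
  have := hv i
  rw [← hxv, applySeq_apply_of_eq_zero E (Nat.le_zero.1 hx)] at this
  exact this.false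

lemma diffExt_succ (i : Fin n) : diffExt u v (i + 1) = (u i : ℤ) - v i :=
  dif_pos ⟨by omega, i.isLt⟩

lemma diffExt_zero : diffExt u v 0 = 0 := dif_neg (by omega)

lemma diffExt_last : diffExt u v (n + 1) = 0 := dif_neg (by omega)

lemma diffExt_self : diffExt v v = 0 := by
  funext q
  unfold diffExt
  split <;> simp

lemma diffExt_applyEvent (he : ValidEvent n e) (hx : ∀ i, 0 < x i)
    (hx' : ∀ i, 0 < applyEvent x e i) (q : ℕ) :
    diffExt (applyEvent x e) v q = diffExt x v q + if e.1 ≤ q ∧ q ≤ e.2.1 then e.2.2 else 0 := by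
  obtain ⟨hs, hst, ht, -⟩ := he
  by_cases hq : 1 ≤ q ∧ q ≤ n
  · obtain ⟨i, rfl⟩ : ∃ i : Fin n, q = i + 1 := ⟨⟨q - 1, by omega⟩, by simp; omega⟩
    rw [diffExt_succ, diffExt_succ]
    split_ifs with hi
    · have hpos := hx' i
      rw [applyEvent_apply_of_mem hi (hx i)] at hpos ⊢
      omega
    · rw [applyEvent_apply_of_not_mem hi, add_zero]
  · rw [diffExt, diffExt, dif_neg hq, dif_neg hq, if_neg (by omega), add_zero]

lemma card_flatStarts_diffExt_le (hv : ∀ i, 0 < v i) (E : List Event)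
    (hE : ∀ e ∈ E, ValidEvent n e) (hxv : applySeq x E = v) :
    #(flatStarts n (diffExt x v)) ≤ 2 * E.length + 1 := by
  induction E generalizing x with
  | nil =>
    subst hxv
    simp [applySeq, diffExt_self, flatStarts_zero]
  | cons e E ih =>
    have hxv' : applySeq (applyEvent x e) E = v := hxv
    have hsub := flatStarts_subset_of_eq_add_ite (n := n) (diffExt_applyEvent (v := v)
      (hE e List.mem_cons_self) (pos_of_applySeq_eq hxv hv) (pos_of_applySeq_eq hxv' hv))
    have hrest := ih (fun e' he' => hE e' (List.mem_cons_of_mem e he')) hxv'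
    have hcard := (card_le_card hsub).trans (card_insert_le _ _)
    have hcard' := card_insert_le (e.2.1 + 1) (flatStarts n (diffExt (applyEvent x e) v))
    simp only [List.length_cons]
    omega

end Profiles

section Distance

variable {n : ℕ} {u v : CNP n}

lemma eventCost_anyCost {x : CNP n} {e : Event} (he : ValidEvent n e) :
    eventCost anyCost x e = 1 := by
  obtain ⟨hs, hst, ht, -⟩ := he
  refine sup_const ⟨⟨e.1 - 1, by omega⟩, ?_⟩ 1
  simp only [mem_filter, mem_univ, true_and]
  omega

lemma seqCost_anyCost (E : List Event) (x : CNP n) (hE : ∀ e ∈ E, ValidEvent n e) :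
    seqCost anyCost x E = E.length := by
  induction E generalizing x with
  | nil => rfl
  | cons e E ih =>
    rw [seqCost, eventCost_anyCost (hE e List.mem_cons_self),
      ih _ fun e' he' => hE e' (List.mem_cons_of_mem e he'), List.length_cons, Nat.cast_succ,
      add_comm]

lemma distAny_le_length {E : List Event} (hE : ∀ e ∈ E, ValidEvent n e)
    (huv : applySeq u E = v) : distAny u v ≤ E.length :=
  sInf_le ⟨E, hE, huv, seqCost_anyCost E u hE⟩

lemma le_distAny {m : ℕ}
    (h : ∀ E : List Event, (∀ e ∈ E, ValidEvent n e) → applySeq u E = v → m ≤ E.length) :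
    (m : ℕ∞) ≤ distAny u v := by
  refine le_sInf ?_
  rintro c ⟨E, hE, huv, rfl⟩
  rw [seqCost_anyCost E u hE]
  exact Nat.cast_le.2 (h E hE huv)

lemma numFlat_sub_one_le_two_mul_distAny (hv : ∀ i, 0 < v i) :
    ((numFlat n (diffExt u v) - 1 : ℕ) : ℕ∞) ≤ 2 * distAny u v := by
  set N := numFlat n (diffExt u v)
  have hhalf : ((N / 2 : ℕ) : ℕ∞) ≤ distAny u v := le_distAny fun E hE huv => by
    have := card_flatStarts_diffExt_le hv E hE huv
    rw [← numFlat_eq_card_flatStarts] at this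
    omega
  calc ((N - 1 : ℕ) : ℕ∞) ≤ ((2 * (N / 2) : ℕ) : ℕ∞) := Nat.cast_le.2 (by omega)
    _ = 2 * ((N / 2 : ℕ) : ℕ∞) := by push_cast; rfl
    _ ≤ 2 * distAny u v := by gcongr

lemma applySeq_eq_of_pairwise_disjoint {x y : CNP n} (E : List Event)
    (hdisj : E.Pairwise fun e e' => e.2.1 < e'.1 ∨ e'.2.1 < e.1)
    (hcov : ∀ e ∈ E, ∀ i : Fin n, e.1 ≤ (i : ℕ) + 1 → (i : ℕ) + 1 ≤ e.2.1 →
      0 < x i ∧ (x i : ℤ) + e.2.2 = y i)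
    (hfree : ∀ i : Fin n, (∀ e ∈ E, ¬(e.1 ≤ (i : ℕ) + 1 ∧ (i : ℕ) + 1 ≤ e.2.1)) → x i = y i) :
    applySeq x E = y := by
  induction E generalizing x with
  | nil => exact funext fun i => hfree i (by simp)
  | cons e E ih =>
    obtain ⟨hdisj_e, hdisj⟩ := List.pairwise_cons.1 hdisj
    refine ih hdisj (fun e' he' i hi hi' => ?_) fun i hi => ?_
    · have hi_e : ¬(e.1 ≤ (i : ℕ) + 1 ∧ (i : ℕ) + 1 ≤ e.2.1) := by
        rcases hdisj_e e' he' with h | h <;> omega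
      rw [applyEvent_apply_of_not_mem hi_e]
      exact hcov e' (List.mem_cons_of_mem e he') i hi hi'
    · by_cases hi_e : e.1 ≤ (i : ℕ) + 1 ∧ (i : ℕ) + 1 ≤ e.2.1
      · obtain ⟨hpos, hval⟩ := hcov e List.mem_cons_self i hi_e.1 hi_e.2
        rw [applyEvent_apply_of_mem hi_e hpos, hval, Int.toNat_natCast]
      · rw [applyEvent_apply_of_not_mem hi_e]
        exact hfree i fun e' he' => (List.mem_cons.1 he').elim (· ▸ hi_e) (hi e')

noncomputable def levelingEvents (u v : CNP n) : List Event :=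
  {a ∈ flatStarts n (diffExt u v) | diffExt u v a ≠ 0}.toList.map
    fun a => (a, flatEnd n (diffExt u v) a, -diffExt u v a)

lemma mem_levelingEvents {e : Event} :
    e ∈ levelingEvents u v ↔ ∃ a ∈ flatStarts n (diffExt u v), diffExt u v a ≠ 0 ∧
      (a, flatEnd n (diffExt u v) a, -diffExt u v a) = e := by
  simp [levelingEvents, and_assoc]

lemma validEvent_of_mem_levelingEvents {e : Event} (he : e ∈ levelingEvents u v) :
    ValidEvent n e := by
  obtain ⟨a, ha, hwa, rfl⟩ := mem_levelingEvents.1 he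
  have ha0 : a ≠ 0 := by rintro rfl; exact hwa diffExt_zero
  exact ⟨by omega, (isFlat_flatEnd (le_of_mem_flatStarts ha)).1,
    flatEnd_le_of_ne_zero diffExt_last (le_of_mem_flatStarts ha) hwa, neg_ne_zero.2 hwa⟩

lemma applySeq_levelingEvents (hu : ∀ i, 0 < u i) : applySeq u (levelingEvents u v) = v := by
  apply applySeq_eq_of_pairwise_disjoint
  · refine List.pairwise_map.2 ((nodup_toList _).imp_of_mem fun ha hb hab => ?_)
    simp only [mem_toList, mem_filter] at ha hb
    rcases Nat.lt_or_gt_of_ne hab with h | h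
    · exact Or.inl (flatEnd_lt_of_lt h hb.1)
    · exact Or.inr (flatEnd_lt_of_lt h ha.1)
  · rintro e he i hi hi'
    obtain ⟨a, ha, -, rfl⟩ := mem_levelingEvents.1 he
    refine ⟨hu i, ?_⟩
    have := diffExt_succ (u := u) (v := v) i
    rw [(isFlat_flatEnd (le_of_mem_flatStarts ha)).eq_left hi hi'] at this
    dsimp only
    omega
  · intro i hfree
    by_contra hne
    have hwi : diffExt u v (i + 1) ≠ 0 := by
      rw [diffExt_succ]
      omega
    obtain ⟨a, ha, hai, hia⟩ :=
      exists_mem_flatStarts_le_le_flatEnd (w := diffExt u v) (by omega : (i : ℕ) + 1 ≤ n + 1)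
    have hwa : diffExt u v (i + 1) = diffExt u v a := (isFlat_flatEnd (le_of_mem_flatStarts ha)).eq_left hai hia
    exact hfree _ (mem_levelingEvents.2 ⟨a, ha, hwa ▸ hwi, rfl⟩) ⟨hai, hia⟩

lemma distAny_le_numFlat_sub_two (huv : u ≠ v) (hu : ∀ i, 0 < u i) :
    distAny u v ≤ ((numFlat n (diffExt u v) - 2 : ℕ) : ℕ∞) := by
  refine (distAny_le_length (fun e => validEvent_of_mem_levelingEvents)
    (applySeq_levelingEvents hu)).trans (Nat.cast_le.2 ?_)
  obtain ⟨i, hi⟩ := Function.ne_iff.1 huv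
  have := card_filter_ne_zero_add_two_le (diffExt_zero (u := u) (v := v)) diffExt_last
    ⟨i + 1, by omega, by rw [diffExt_succ]; omega⟩
  rw [numFlat_eq_card_flatStarts, levelingEvents, List.length_map, length_toList]
  omega

end Distance

/-- the flat-interval count gives a factor-2 approximation of `dist_any`:
for distinct CNPs with no null positions, `(|F_w| - 1)/2 ≤ dist_any(u,v) ≤ |F_w| - 2`,
hence `|F_w| - 2 ≤ 2 · dist_any(u,v)`. -/
theorem stmt7 {n : ℕ} (u v : CNP n) (huv : u ≠ v)
    (hu : ∀ i, 0 < u i) (hv : ∀ i, 0 < v i) :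
    ((numFlat n (diffExt u v) - 1 : ℕ) : ℕ∞) ≤ 2 * distAny u v ∧
    distAny u v ≤ ((numFlat n (diffExt u v) - 2 : ℕ) : ℕ∞) ∧
    ((numFlat n (diffExt u v) - 2 : ℕ) : ℕ∞) ≤ 2 * distAny u v := by
  have hlower := numFlat_sub_one_le_two_mul_distAny (u := u) hv
  exact ⟨hlower, distAny_le_numFlat_sub_two huv hu, (Nat.cast_le.2 (by omega)).trans hlower⟩
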